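/- Let G=(V,E) be a finite connected simple graph, let x ∈ V, and let a, b be vertices of G/x (i.e., a, b ∈ V \ N(x)). If no shortest path from a to b in G passes through x, then d_{G/x}(a,b) ≥ d_G(a,b) − 1. -/

import Mathlib

/-!
A shortest `a`–`b` path in `G/x` that avoids `x` is already a walk in `G`. One that passes
through `x` splits there into two pieces, each of which lifts to a walk in `G` through `x`
at the cost of one extra edge (the contracted edge from `x` to a vertex at distance two
unfolds into two edges through `N(x)`). Hence `d_G(a,x) + d_G(x,b) ≤ d_{G/x}(a,b) + 2`,
whereas `d_G(a,b) < d_G(a,x) + d_G(x,b)` because no shortest `a`–`b` path visits `x`.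
-/

open SimpleGraph

noncomputable def eccentr {V : Type} (G : SimpleGraph V) (x : V) : ℕ :=
  sSup (Set.range (G.dist x))

noncomputable def grRadius {V : Type} (G : SimpleGraph V) : ℕ :=
  sInf (Set.range (eccentr G))

def ncontract {V : Type} (G : SimpleGraph V) (x : V) :
    SimpleGraph {v : V // ¬ G.Adj x v} where
  Adj a b := G.Adj a.1 b.1 ∨
    (a.1 = x ∧ b.1 ≠ x ∧ ∃ y, G.Adj x y ∧ G.Adj y b.1) ∨
    (b.1 = x ∧ a.1 ≠ x ∧ ∃ y, G.Adj x y ∧ G.Adj y a.1)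
  symm := ⟨fun a b h => by
    rcases h with h | h | h
    · exact Or.inl h.symm
    · exact Or.inr (Or.inr h)
    · exact Or.inr (Or.inl h)⟩
  loopless := ⟨fun a h => by
    rcases h with h | ⟨h1, h2, -⟩ | ⟨h1, h2, -⟩
    · exact G.loopless.irrefl _ h
    · exact h2 h1
    · exact h2 h1⟩

namespace SimpleGraph

variable {V : Type} {G : SimpleGraph V} {x : V}

theorem dist_add_one_le_of_forall_shortest_path_not_mem {a b : V}
    (hax : G.Reachable a x) (hxb : G.Reachable x b)
    (hno : ∀ p : G.Walk a b, p.IsPath → p.length = G.dist a b → x ∉ p.support) :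
    G.dist a b + 1 ≤ G.dist a x + G.dist x b := by
  by_contra! hlt
  obtain ⟨p₁, hp₁⟩ := hax.exists_walk_length_eq_dist
  obtain ⟨p₂, hp₂⟩ := hxb.exists_walk_length_eq_dist
  have hlen : (p₁.append p₂).length = G.dist a b := by
    have := dist_le (p₁.append p₂)
    rw [Walk.length_append] at this ⊢
    omega
  exact hno _ ((p₁.append p₂).isPath_of_length_eq_dist hlen) hlen
    (Walk.mem_support_append_iff _ _ |>.mpr (Or.inr p₂.start_mem_support))

end SimpleGraph

namespace ncontract

variable {V : Type} {G : SimpleGraph V} {x : V}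

variable (G x) in
def center : {v : V // ¬ G.Adj x v} :=
  ⟨x, G.loopless.irrefl x⟩

variable (G x) in
noncomputable def proj (v : V) : {v : V // ¬ G.Adj x v} := by
  classical
  exact if h : G.Adj x v then center G x else ⟨v, h⟩

theorem proj_val (c : {v : V // ¬ G.Adj x v}) : proj G x c.1 = c := by
  simp [proj, c.2]

theorem reachable_proj_of_adj {u w : V} (h : G.Adj u w) :
    (ncontract G x).Reachable (proj G x u) (proj G x w) := by
  unfold proj
  split_ifs with hu hw hw
  · rfl
  · rcases eq_or_ne w x with hwx | hwx
    · exact (Subtype.ext hwx.symm : center G x = ⟨w, hw⟩) ▸ .rfl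
    · exact Adj.reachable (Or.inr (Or.inl ⟨rfl, hwx, u, hu, h⟩))
  · rcases eq_or_ne u x with hux | hux
    · exact (Subtype.ext hux : (⟨u, hu⟩ : {v : V // ¬ G.Adj x v}) = center G x) ▸ .rfl
    · exact Adj.reachable (Or.inr (Or.inr ⟨rfl, hux, w, hw, h.symm⟩))
  · exact Adj.reachable (Or.inl h)

theorem reachable_proj {u w : V} (p : G.Walk u w) :
    (ncontract G x).Reachable (proj G x u) (proj G x w) := by
  induction p with
  | nil => rfl
  | cons h _ ih => exact (reachable_proj_of_adj h).trans ih

theorem _root_.SimpleGraph.Connected.ncontract (hG : G.Connected) (x : V) :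
    (ncontract G x).Connected := by
  have : Nonempty {v : V // ¬ G.Adj x v} := ⟨center G x⟩
  refine Connected.mk fun c d => ?_
  obtain ⟨p⟩ := hG.preconnected c.1 d.1
  simpa only [proj_val] using reachable_proj (x := x) p

theorem adj_of_ne_center {c d : {v : V // ¬ G.Adj x v}} (h : (ncontract G x).Adj c d)
    (hc : c ≠ center G x) (hd : d ≠ center G x) : G.Adj c.1 d.1 := by
  rcases h with h | ⟨h, -⟩ | ⟨h, -⟩
  · exact h
  · exact absurd (Subtype.ext h) hc
  · exact absurd (Subtype.ext h) hd

theorem exists_walk_length_eq {c d : {v : V // ¬ G.Adj x v}} (q : (ncontract G x).Walk c d)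
    (hq : center G x ∉ q.support) : ∃ p : G.Walk c.1 d.1, p.length = q.length := by
  induction q with
  | nil => exact ⟨Walk.nil, rfl⟩
  | @cons c e d h q ih =>
    rw [Walk.support_cons, List.mem_cons, not_or] at hq
    have he : e ≠ center G x := fun he => hq.2 (he ▸ q.start_mem_support)
    obtain ⟨p, hp⟩ := ih hq.2
    exact ⟨Walk.cons (adj_of_ne_center h (Ne.symm hq.1) he) p, by simp [hp]⟩

theorem dist_le_length {c d : {v : V // ¬ G.Adj x v}} (q : (ncontract G x).Walk c d)
    (hq : center G x ∉ q.support) : G.dist c.1 d.1 ≤ q.length := by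
  obtain ⟨p, hp⟩ := exists_walk_length_eq q hq
  exact hp ▸ dist_le p

theorem dist_center_le_length_add_one {d : {v : V // ¬ G.Adj x v}}
    (q : (ncontract G x).Walk (center G x) d) (hq : q.IsPath) :
    G.dist x d.1 ≤ q.length + 1 := by
  cases q with
  | nil => simp [center]
  | @cons _ e _ h q =>
    rw [Walk.cons_isPath_iff] at hq
    obtain ⟨p, hp⟩ := exists_walk_length_eq q hq.2
    suffices G.dist x d.1 ≤ q.length + 2 from this
    rcases h with h | ⟨-, -, y, hxy, hye⟩ | ⟨-, hx, -⟩
    · exact absurd h e.2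
    -- the contracted edge from `x` to `e` unfolds into the two edges `x y` and `y e`
    · simpa [hp] using dist_le (Walk.cons hxy (Walk.cons hye p))
    · exact absurd rfl hx

end ncontract

theorem stmt_3 {V : Type} (G : SimpleGraph V) (hconn : G.Connected)
    (x a b : V) (ha : ¬ G.Adj x a) (hb : ¬ G.Adj x b)
    (hno : ∀ p : G.Walk a b, p.IsPath → p.length = G.dist a b → x ∉ p.support) :
    G.dist a b ≤ (ncontract G x).dist ⟨a, ha⟩ ⟨b, hb⟩ + 1 := by
  classical
  obtain ⟨q, hq, hlen⟩ := (hconn.ncontract x).exists_path_of_dist ⟨a, ha⟩ ⟨b, hb⟩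
  by_cases hxq : ncontract.center G x ∈ q.support
  · have hsplit := congrArg Walk.length (q.take_spec hxq)
    rw [Walk.length_append, hlen] at hsplit
    have hax := ncontract.dist_center_le_length_add_one _ (hq.takeUntil hxq).reverse
    have hxb := ncontract.dist_center_le_length_add_one _ (hq.dropUntil hxq)
    rw [Walk.length_reverse, dist_comm] at hax
    dsimp only at hax hxb
    have := dist_add_one_le_of_forall_shortest_path_not_mem
      (hconn.preconnected a x) (hconn.preconnected x b) hno
    omega
  · exact (ncontract.dist_le_length q hxq).trans (by omega)
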